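/- Let W be a graphon with values in [0,1] such that the set {(x,y) ∈ I² : W(x,y) ∈ {0,1}} has Lebesgue measure strictly less than 1, and let W₁, W₂, … be graphons with values in [0,1], each taking values in {0,1} almost everywhere, such that δ_□(W_n, W) → 0 as n → ∞. Then the sequence (W_n) contains no subsequence that is Cauchy with respect to δ₁; that is, there is no strictly increasing sequence of indices n₁ < n₂ < … such that for every ε > 0 there is K with δ₁(W_{n_k}, W_{n_l}) < ε for all k, l ≥ K. -/

import Mathlib

open MeasureTheory Set
open scoped symmDiff

noncomputable section

/-- The unit interval `[0,1]` with Lebesgue measure. -/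
abbrev I01 : Type := unitInterval

/-- A graphon: a bounded symmetric Lebesgue(=a.e.)-measurable function on `I² `. -/
def IsGraphon (W : I01 × I01 → ℝ) : Prop :=
  (∀ x y : I01, W (x, y) = W (y, x)) ∧ (∃ C : ℝ, ∀ p, |W p| ≤ C) ∧ AEMeasurable W volume

/-- The cut norm of `W`. -/
def cutNorm (W : I01 × I01 → ℝ) : ℝ :=
  sSup { r : ℝ | ∃ S T : Set I01, NullMeasurableSet S volume ∧ NullMeasurableSet T volume ∧
    r = |∫ p in S ×ˢ T, W p| }

/-- The `L¹` norm of `W`. -/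
def l1Norm (W : I01 × I01 → ℝ) : ℝ := ∫ p, |W p|

/-- Lebesgue-measurable measure preserving self-maps of `[0,1]` (the class `Φ`). -/
def MPhi (φ : I01 → I01) : Prop :=
  AEMeasurable φ volume ∧
    ∀ A : Set I01, NullMeasurableSet A volume → volume (φ ⁻¹' A) = volume A

/-- Invertible measure preserving maps (the class `Φ₀`). -/
def MPhi0 (φ : I01 → I01) : Prop :=
  Function.Bijective φ ∧ MPhi φ ∧ MPhi (Function.invFun φ)

/-- `W^φ (x,y) = W (φ x, φ y)`. -/
def compMap (W : I01 × I01 → ℝ) (φ : I01 → I01) : I01 × I01 → ℝ :=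
  fun p => W (φ p.1, φ p.2)

/-- The distance `δ₁` on graphons. -/
def gDelta1 (U W : I01 × I01 → ℝ) : ℝ :=
  sInf { r : ℝ | ∃ φ : I01 → I01, MPhi0 φ ∧ r = l1Norm (fun p => U p - compMap W φ p) }

/-- The cut distance `δ_□` on graphons. -/
def gDeltaBox (U W : I01 × I01 → ℝ) : ℝ :=
  sInf { r : ℝ | ∃ φ : I01 → I01, MPhi0 φ ∧ r = cutNorm (fun p => U p - compMap W φ p) }

open Classical in
/-- The homomorphism density `t(F,W)` of a graph `F` on `[k]` in `W`. -/
def homDensity {k : ℕ} (F : SimpleGraph (Fin k)) (W : I01 × I01 → ℝ) : ℝ :=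
  ∫ x : Fin k → I01,
    ∏ e ∈ Finset.univ.filter (fun e : Fin k × Fin k => e.1 < e.2 ∧ F.Adj e.1 e.2),
      W (x e.1, x e.2)

open Classical in
/-- The real-valued adjacency indicator of a graph. -/
def adjInd {V : Type*} (G : SimpleGraph V) (i j : V) : ℝ := if G.Adj i j then 1 else 0

/-- Overlay matrices: nonnegative with row sums `1/m` and column sums `1/n`. -/
def IsOverlay (m n : ℕ) (A : Matrix (Fin m) (Fin n) ℝ) : Prop :=
  (∀ i j, 0 ≤ A i j) ∧ (∀ i, ∑ j, A i j = 1 / (m : ℝ)) ∧ (∀ j, ∑ i, A i j = 1 / (n : ℝ))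

/-- The fractional distance `δ₁` between two graphs. -/
def graphDelta1 {m n : ℕ} (G : SimpleGraph (Fin m)) (H : SimpleGraph (Fin n)) : ℝ :=
  sInf { r : ℝ | ∃ A : Matrix (Fin m) (Fin n) ℝ, IsOverlay m n A ∧
    r = ∑ i, ∑ j, ∑ g, ∑ h, A i g * A j h * |adjInd G i j - adjInd H g h| }

/-- The edit distance `δ̂₁` between two graphs on `[n]`. -/
def editDist {n : ℕ} (G H : SimpleGraph (Fin n)) : ℝ :=
  (2 / (n : ℝ) ^ 2) *
    sInf { r : ℝ | ∃ σ : Fin n ≃ Fin n,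
      r = (∑ i, ∑ j, |adjInd G (σ i) (σ j) - adjInd H i j|) / 2 }

open Classical in
/-- The step graphon `W_G` associated with a graph `G` on `[n]`. -/
def stepGraphon {n : ℕ} (G : SimpleGraph (Fin n)) : I01 × I01 → ℝ :=
  fun p => if ∃ k l : Fin n, G.Adj k l ∧
      ((k : ℕ) : ℝ) / n ≤ (p.1 : ℝ) ∧ (p.1 : ℝ) < ((k : ℕ) + 1 : ℝ) / n ∧
      ((l : ℕ) : ℝ) / n ≤ (p.2 : ℝ) ∧ (p.2 : ℝ) < ((l : ℕ) + 1 : ℝ) / n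
    then 1 else 0

/-!
Suppose some subsequence were δ₁-Cauchy, and thin it out so that consecutive δ₁-distances are
below `2⁻ᵗ`. Composing near-optimal measure-preserving bijections realigns these graphons into a
Cauchy sequence in `L¹`; its `L¹` limit `U` is `{0,1}`-valued a.e. because every term is.
Transporting the cut-distance convergence to `W` along the same bijections gives rearrangements
`W^χₜ` with `∫_{S×T} (U - W^χₜ) → 0` for all rectangles. Rectangles form a π-system generating the
product σ-algebra, and a bounded integrand makes the family of sets `A` with `∫_A (U - W^χₜ) → 0`
closed under complements and countable disjoint unions, so by Dynkin's theorem it contains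
`{U = 1}` and its complement. As `U ∈ {0,1}` and `W^χₜ ∈ [0,1]`, this says `∫ |U - W^χₜ| → 0`.
But `∫ |U - W^χₜ| ≥ ∫ min(W^χₜ, 1 - W^χₜ) = ∫ min(W, 1 - W) > 0`.
-/

open Filter Topology

theorem min_one_sub_le_abs_sub {u y : ℝ} (hu : u = 0 ∨ u = 1) : min y (1 - y) ≤ |u - y| := by
  rcases hu with rfl | rfl
  · exact (min_le_left _ _).trans (by rw [zero_sub, abs_neg]; exact le_abs_self y)
  · exact (min_le_right _ _).trans (le_abs_self _)

section MeasureTheory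

variable {α : Type*} {m : MeasurableSpace α} {μ : Measure α}

theorem integral_min_one_sub_pos [IsProbabilityMeasure μ] {W : α → ℝ}
    (hWm : AEStronglyMeasurable W μ) (hW01 : ∀ x, W x ∈ Icc 0 1)
    (hnot : μ {x | W x = 0 ∨ W x = 1} < 1) : 0 < ∫ x, min (W x) (1 - W x) ∂μ := by
  have hnonneg : 0 ≤ fun x => min (W x) (1 - W x) := fun x =>
    le_min (hW01 x).1 (sub_nonneg.2 (hW01 x).2)
  refine (integral_nonneg hnonneg).lt_of_ne fun h => hnot.not_ge ?_
  have hint : Integrable (fun x => min (W x) (1 - W x)) μ :=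
    .of_bound (by fun_prop) 1 (Eventually.of_forall fun x => by
      rw [Real.norm_eq_abs, abs_of_nonneg (hnonneg x)]
      exact (min_le_right _ _).trans (by linarith [(hW01 x).1]))
  have hae : ∀ᵐ x ∂μ, W x = 0 ∨ W x = 1 := by
    filter_upwards [(integral_eq_zero_iff_of_nonneg hnonneg hint).1 h.symm] with x hx
    rcases min_eq_iff.1 hx with ⟨hx, -⟩ | ⟨hx, -⟩
    · exact .inl hx
    · exact .inr (by simp only [Pi.zero_apply] at hx; linarith)
  rw [measure_congr (ae_eq_univ.2 (ae_iff.1 hae) : {x | W x = 0 ∨ W x = 1} =ᵐ[μ] univ),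
    measure_univ]

theorem exists_tendsto_integral_abs_sub_of_summable {f : ℕ → α → ℝ}
    (hf : ∀ n, Integrable (f n) μ) {d : ℕ → ℝ} (hd : Summable d)
    (hfd : ∀ n, ∫ x, |f n x - f (n + 1) x| ∂μ ≤ d n) :
    ∃ g : α → ℝ, StronglyMeasurable g ∧ Integrable g μ ∧ TendstoInMeasure μ f atTop g ∧
      Tendsto (fun n => ∫ x, |g x - f n x| ∂μ) atTop (𝓝 0) := by
  let u : ℕ → α →₁[μ] ℝ := fun n => (hf n).toL1 (f n)
  have hu (n : ℕ) : u n =ᵐ[μ] f n := (hf n).coeFn_toL1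
  have hdist (n : ℕ) (v : α →₁[μ] ℝ) : dist v (u n) = ∫ x, |v x - f n x| ∂μ := by
    rw [L1.dist_eq_integral_dist]
    exact integral_congr_ae ((hu n).mono fun x hx => by simp only [hx, Real.dist_eq])
  have hstep (n : ℕ) : dist (u n) (u (n + 1)) ≤ d n := by
    rw [hdist]
    refine le_of_eq_of_le (integral_congr_ae ((hu n).mono fun x hx => ?_)) (hfd n)
    simp only [hx]
  obtain ⟨L, hL⟩ := cauchySeq_tendsto_of_complete (cauchySeq_of_dist_le_of_summable d hstep hd)
  refine ⟨L, Lp.stronglyMeasurable L, L1.integrable_coeFn L,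
    (tendstoInMeasure_of_tendsto_Lp hL).congr_left hu, ?_⟩
  refine (tendsto_iff_dist_tendsto_zero.1 hL).congr fun n => ?_
  rw [dist_comm, hdist]

theorem MeasureTheory.TendstoInMeasure.ae_mem_of_isClosed {E : Type*} [MetricSpace E]
    {f : ℕ → α → E} {g : α → E} (h : TendstoInMeasure μ f atTop g) {C : Set E}
    (hC : IsClosed C) (hfC : ∀ n, ∀ᵐ x ∂μ, f n x ∈ C) : ∀ᵐ x ∂μ, g x ∈ C := by
  obtain ⟨ns, -, hns⟩ := h.exists_seq_tendsto_ae
  filter_upwards [hns, ae_all_iff.2 hfC] with x hx hxC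
  exact hC.mem_of_tendsto hx (Eventually.of_forall fun k => hxC _)

theorem tendsto_setIntegral_of_isPiSystem [IsFiniteMeasure μ] {ι : Type*} {l : Filter ι}
    {S : Set (Set α)} (hgen : m = MeasurableSpace.generateFrom S) (hS : IsPiSystem S)
    {f : ι → α → ℝ} (hfm : ∀ i, AEStronglyMeasurable (f i) μ) {C : ℝ}
    (hC : ∀ i, ∀ᵐ x ∂μ, |f i x| ≤ C) (huniv : Tendsto (fun i => ∫ x, f i x ∂μ) l (𝓝 0))
    (hbasic : ∀ s ∈ S, Tendsto (fun i => ∫ x in s, f i x ∂μ) l (𝓝 0))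
    {A : Set α} (hA : MeasurableSet A) : Tendsto (fun i => ∫ x in A, f i x ∂μ) l (𝓝 0) := by
  have hf (i : ι) : Integrable (f i) μ := .of_bound (hfm i) C (hC i)
  induction A, hA using MeasurableSpace.induction_on_inter hgen hS with
  | empty => simpa using tendsto_const_nhds
  | basic s hs => exact hbasic s hs
  | compl s hs ih =>
    simp_rw [setIntegral_compl hs (hf _)]
    simpa using huniv.sub ih
  | iUnion s hdisj hsm ih =>
    simp_rw [integral_iUnion hsm hdisj (hf _).integrableOn]
    simpa using tendsto_tsum_of_dominated_convergence
      ((summable_measure_toReal hsm hdisj).mul_left C) ih (Eventually.of_forall fun i k =>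
        norm_setIntegral_le_of_norm_le_const_ae (measure_lt_top _ _) (ae_restrict_of_ae (hC i)))

end MeasureTheory

theorem tendsto_integral_abs_sub_of_tendsto_setIntegral_prod {β γ : Type*} [MeasurableSpace β]
    [MeasurableSpace γ] {μ : Measure β} {ν : Measure γ} [IsFiniteMeasure μ] [IsFiniteMeasure ν]
    {ι : Type*} {l : Filter ι} {U : β × γ → ℝ} (hUm : Measurable U)
    (hU : ∀ᵐ p ∂μ.prod ν, U p = 0 ∨ U p = 1) {Y : ι → β × γ → ℝ}
    (hYm : ∀ i, AEStronglyMeasurable (Y i) (μ.prod ν)) (hY : ∀ i, ∀ᵐ p ∂μ.prod ν, Y i p ∈ Icc 0 1)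
    (hrect : ∀ s t, MeasurableSet s → MeasurableSet t →
      Tendsto (fun i => ∫ p in s ×ˢ t, (U p - Y i p) ∂μ.prod ν) l (𝓝 0)) :
    Tendsto (fun i => ∫ p, |U p - Y i p| ∂μ.prod ν) l (𝓝 0) := by
  have hbound (i : ι) : ∀ᵐ p ∂μ.prod ν, |U p - Y i p| ≤ 1 := by
    filter_upwards [hU, hY i] with p hUp ⟨h0, h1⟩
    rcases hUp with hUp | hUp <;> rw [hUp, abs_le] <;> constructor <;> linarith
  have hint (i : ι) : Integrable (fun p => U p - Y i p) (μ.prod ν) :=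
    .of_bound (hUm.aestronglyMeasurable.sub (hYm i)) 1 (hbound i)
  have hset {A : Set (β × γ)} (hA : MeasurableSet A) :
      Tendsto (fun i => ∫ p in A, (U p - Y i p) ∂μ.prod ν) l (𝓝 0) := by
    refine tendsto_setIntegral_of_isPiSystem generateFrom_prod.symm isPiSystem_prod
      (fun i => (hint i).1) hbound ?_ ?_ hA
    · simpa [Measure.restrict_univ] using hrect univ univ .univ .univ
    · rintro _ ⟨s, hs, t, ht, rfl⟩
      exact hrect s t hs ht
  set A := U ⁻¹' {1}
  have hAm : MeasurableSet A := hUm (measurableSet_singleton 1)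
  have hsplit (i : ι) : ∫ p, |U p - Y i p| ∂μ.prod ν =
      ∫ p in A, (U p - Y i p) ∂μ.prod ν - ∫ p in Aᶜ, (U p - Y i p) ∂μ.prod ν := by
    rw [← integral_add_compl hAm (hint i).abs, sub_eq_add_neg, ← integral_neg]
    congr 1 <;> refine setIntegral_congr_ae (by measurability) ?_ <;>
      filter_upwards [hU, hY i] with p hUp ⟨h0, h1⟩ hpA
    · rw [show U p = 1 from hpA, abs_of_nonneg (by linarith)]
    · rw [hUp.resolve_right hpA, abs_of_nonpos (by linarith)]
  simpa [hsplit] using (hset hAm).sub (hset hAm.compl)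

namespace MPhi

variable {φ ψ : I01 → I01}

theorem map_eq (hφ : MPhi φ) : Measure.map φ volume = volume := by
  ext s hs
  rw [Measure.map_apply_of_aemeasurable hφ.1 hs, hφ.2 s hs.nullMeasurableSet]

theorem of_map_eq (hm : AEMeasurable φ volume) (h : Measure.map φ volume = volume) : MPhi φ :=
  ⟨hm, fun A hA => by rw [← Measure.map_apply₀ hm (by rwa [h]), h]⟩

theorem id : MPhi id := ⟨aemeasurable_id, fun _ _ => rfl⟩

theorem comp (hφ : MPhi φ) (hψ : MPhi ψ) : MPhi (φ ∘ ψ) := by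
  have hφ' : AEMeasurable φ (Measure.map ψ volume) := by rw [hψ.map_eq]; exact hφ.1
  refine of_map_eq (hφ'.comp_aemeasurable hψ.1) ?_
  rw [← AEMeasurable.map_map_of_aemeasurable hφ' hψ.1, hψ.map_eq, hφ.map_eq]

theorem exists_measurePreserving_prodMap (hφ : MPhi φ) :
    ∃ g : I01 → I01, MeasurePreserving (Prod.map g g) volume volume ∧
      Prod.map φ φ =ᵐ[volume] Prod.map g g := by
  have hg : MeasurePreserving (hφ.1.mk φ) volume volume :=
    ⟨hφ.1.measurable_mk, by rw [← Measure.map_congr hφ.1.ae_eq_mk, hφ.map_eq]⟩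
  refine ⟨hφ.1.mk φ, hg.prod hg, ?_⟩
  filter_upwards [Measure.quasiMeasurePreserving_fst.ae_eq_comp hφ.1.ae_eq_mk,
    Measure.quasiMeasurePreserving_snd.ae_eq_comp hφ.1.ae_eq_mk] with p h1 h2
  exact Prod.ext h1 h2

theorem aemeasurable_prodMap (hφ : MPhi φ) : AEMeasurable (Prod.map φ φ) volume := by
  obtain ⟨g, hg, hφg⟩ := hφ.exists_measurePreserving_prodMap
  exact hg.measurable.aemeasurable.congr hφg.symm

theorem map_prodMap (hφ : MPhi φ) : Measure.map (Prod.map φ φ) volume = volume := by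
  obtain ⟨g, hg, hφg⟩ := hφ.exists_measurePreserving_prodMap
  rw [Measure.map_congr hφg, hg.map_eq]

theorem integrable_compMap (hφ : MPhi φ) {F : I01 × I01 → ℝ} (hF : Integrable F volume) :
    Integrable (compMap F φ) volume :=
  (by rwa [hφ.map_prodMap] : Integrable F (Measure.map (Prod.map φ φ) volume)).comp_aemeasurable
    hφ.aemeasurable_prodMap

theorem integral_compMap (hφ : MPhi φ) {F : I01 × I01 → ℝ}
    (hF : AEStronglyMeasurable F volume) : ∫ p, compMap F φ p = ∫ p, F p := by
  rw [← hφ.map_prodMap] at hF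
  have := integral_map hφ.aemeasurable_prodMap hF
  rw [hφ.map_prodMap] at this
  exact this.symm

theorem ae_compMap (hφ : MPhi φ) {P : I01 × I01 → Prop} (h : ∀ᵐ p, P p) :
    ∀ᵐ p : I01 × I01, P (φ p.1, φ p.2) :=
  ae_of_ae_map hφ.aemeasurable_prodMap (by rwa [hφ.map_prodMap])

end MPhi

namespace MPhi0

variable {φ ψ : I01 → I01}

theorem id : MPhi0 id := by
  refine ⟨Function.bijective_id, MPhi.id, ?_⟩
  rw [show Function.invFun (_root_.id : I01 → I01) = _root_.id from
    Function.invFun_comp Function.injective_id]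
  exact MPhi.id

theorem comp (hφ : MPhi0 φ) (hψ : MPhi0 ψ) : MPhi0 (φ ∘ ψ) := by
  refine ⟨hφ.1.comp hψ.1, hφ.2.1.comp hψ.2.1, ?_⟩
  have hinv : Function.invFun (φ ∘ ψ) = Function.invFun ψ ∘ Function.invFun φ :=
    funext fun x => (hφ.1.comp hψ.1).injective <| by
      rw [Function.invFun_eq ((hφ.1.comp hψ.1).surjective x)]
      simp only [Function.comp_apply, Function.invFun_eq (hψ.1.surjective _),
        Function.invFun_eq (hφ.1.surjective x)]
  exact hinv ▸ hψ.2.2.comp hφ.2.2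

end MPhi0

theorem IsGraphon.integrable {W : I01 × I01 → ℝ} (hW : IsGraphon W) : Integrable W volume := by
  obtain ⟨-, ⟨C, hC⟩, hWm⟩ := hW
  exact .of_bound hWm.aestronglyMeasurable C (Eventually.of_forall hC)

theorem abs_setIntegral_le_l1Norm {F : I01 × I01 → ℝ} (hF : Integrable F volume)
    (s : Set (I01 × I01)) : |∫ p in s, F p| ≤ l1Norm F :=
  abs_integral_le_integral_abs.trans
    (setIntegral_le_integral hF.abs (Eventually.of_forall fun _ => abs_nonneg _))

theorem abs_setIntegral_prod_le_cutNorm {F : I01 × I01 → ℝ} (hF : Integrable F volume)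
    {S T : Set I01} (hS : NullMeasurableSet S volume) (hT : NullMeasurableSet T volume) :
    |∫ p in S ×ˢ T, F p| ≤ cutNorm F :=
  le_csSup ⟨l1Norm F, by rintro r ⟨S, T, -, -, rfl⟩; exact abs_setIntegral_le_l1Norm hF _⟩
    ⟨S, T, hS, hT, rfl⟩

theorem MPhi0.abs_setIntegral_compMap_le_cutNorm {ψ : I01 → I01} (hψ : MPhi0 ψ)
    {H : I01 × I01 → ℝ} (hH : Integrable H volume) {S T : Set I01} (hS : MeasurableSet S)
    (hT : MeasurableSet T) : |∫ p in S ×ˢ T, compMap H ψ p| ≤ cutNorm H := by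
  set S' := Function.invFun ψ ⁻¹' S
  set T' := Function.invFun ψ ⁻¹' T
  have hS' : NullMeasurableSet S' volume := hψ.2.2.1.nullMeasurableSet_preimage hS
  have hT' : NullMeasurableSet T' volume := hψ.2.2.1.nullMeasurableSet_preimage hT
  have hST' : NullMeasurableSet (S' ×ˢ T') (volume : Measure (I01 × I01)) := hS'.prod hT'
  have hmem (p : I01 × I01) : (ψ p.1, ψ p.2) ∈ S' ×ˢ T' ↔ p ∈ S ×ˢ T := by
    simp only [S', T', mem_prod, mem_preimage, Function.leftInverse_invFun hψ.1.injective _]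
  have hmove : ∫ p in S ×ˢ T, compMap H ψ p = ∫ p in S' ×ˢ T', H p := by
    rw [← integral_indicator (hS.prod hT), ← integral_indicator₀ hST',
      ← hψ.2.1.integral_compMap (hH.aestronglyMeasurable.indicator₀ hST')]
    congr 1 with p
    classical
    simp only [compMap, indicator_apply, hmem]
  rw [hmove]
  exact abs_setIntegral_prod_le_cutNorm hH hS' hT'

theorem exists_mPhi0_lt_of_sInf_lt {F : (I01 → I01) → ℝ} {ε : ℝ}
    (h : sInf {r | ∃ φ, MPhi0 φ ∧ r = F φ} < ε) : ∃ φ, MPhi0 φ ∧ F φ < ε := by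
  obtain ⟨_, ⟨φ, hφ, rfl⟩, hlt⟩ := exists_lt_of_csInf_lt
    (show Set.Nonempty {r | ∃ φ, MPhi0 φ ∧ r = F φ} from ⟨F id, id, MPhi0.id, rfl⟩) h
  exact ⟨φ, hφ, hlt⟩

theorem exists_mPhi0_integral_abs_sub_compMap_lt {X : ℕ → I01 × I01 → ℝ}
    (hX : ∀ t, Integrable (X t) volume) {d : ℕ → ℝ}
    (hd : ∀ t, gDelta1 (X t) (X (t + 1)) < d t) :
    ∃ ψ : ℕ → I01 → I01, (∀ t, MPhi0 (ψ t)) ∧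
      ∀ t, ∫ p, |compMap (X t) (ψ t) p - compMap (X (t + 1)) (ψ (t + 1)) p| < d t := by
  choose φ hφ hlt using fun t => exists_mPhi0_lt_of_sInf_lt (hd t)
  let ψ : ℕ → I01 → I01 := fun t => Nat.rec id (fun t ψt => φ t ∘ ψt) t
  have hψ (t : ℕ) : MPhi0 (ψ t) := by
    induction t with
    | zero => exact MPhi0.id
    | succ t ih => exact (hφ t).comp ih
  refine ⟨ψ, hψ, fun t => ?_⟩
  have hint : Integrable (fun q => X t q - compMap (X (t + 1)) (φ t) q) volume :=
    (hX t).sub ((hφ t).2.1.integrable_compMap (hX (t + 1)))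
  calc ∫ p, |compMap (X t) (ψ t) p - compMap (X (t + 1)) (ψ (t + 1)) p|
      = ∫ p, compMap (fun q => |X t q - compMap (X (t + 1)) (φ t) q|) (ψ t) p := rfl
    _ = l1Norm (fun q => X t q - compMap (X (t + 1)) (φ t) q) :=
      (hψ t).2.1.integral_compMap hint.abs.1
    _ < d t := hlt t

theorem exists_zero_one_limit_of_gDelta1_lt_geometric {X : ℕ → I01 × I01 → ℝ}
    (hX : ∀ t, Integrable (X t) volume) (hX01 : ∀ t, ∀ᵐ p, X t p = 0 ∨ X t p = 1)
    (hδ : ∀ t, gDelta1 (X t) (X (t + 1)) < (1 / 2) ^ t) :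
    ∃ U : I01 × I01 → ℝ, Measurable U ∧ Integrable U volume ∧ (∀ᵐ p, U p = 0 ∨ U p = 1) ∧
      ∃ ψ : ℕ → I01 → I01, (∀ t, MPhi0 (ψ t)) ∧
        Tendsto (fun t => ∫ p, |U p - compMap (X t) (ψ t) p|) atTop (𝓝 0) := by
  obtain ⟨ψ, hψ, hψX⟩ := exists_mPhi0_integral_abs_sub_compMap_lt hX hδ
  obtain ⟨U, hUm, hU, hUX, hUlim⟩ := exists_tendsto_integral_abs_sub_of_summable
    (fun t => (hψ t).2.1.integrable_compMap (hX t)) summable_geometric_two fun t => (hψX t).le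
  have hU01 : ∀ᵐ p, U p ∈ ({0, 1} : Set ℝ) :=
    hUX.ae_mem_of_isClosed (toFinite _).isClosed fun t => (hψ t).2.1.ae_compMap (hX01 t)
  exact ⟨U, hUm.measurable, hU, hU01, ψ, hψ, hUlim⟩

theorem abs_setIntegral_sub_compMap_comp_le {U X W : I01 × I01 → ℝ} {φ ψ : I01 → I01}
    (hψ : MPhi0 ψ) (hUX : Integrable (fun p => U p - compMap X ψ p) volume)
    (hXW : Integrable (fun q => X q - compMap W φ q) volume) {S T : Set I01}
    (hS : MeasurableSet S) (hT : MeasurableSet T) :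
    |∫ p in S ×ˢ T, (U p - compMap W (φ ∘ ψ) p)| ≤
      (∫ p, |U p - compMap X ψ p|) + cutNorm (fun q => X q - compMap W φ q) := by
  have hsplit : ∫ p in S ×ˢ T, (U p - compMap W (φ ∘ ψ) p) =
      (∫ p in S ×ˢ T, (U p - compMap X ψ p)) +
        ∫ p in S ×ˢ T, compMap (fun q => X q - compMap W φ q) ψ p := by
    rw [← integral_add hUX.integrableOn (hψ.2.1.integrable_compMap hXW).integrableOn]
    congr 1 with p
    simp only [compMap, Function.comp_apply]
    ring
  rw [hsplit]
  exact (abs_add_le _ _).trans (add_le_add (abs_setIntegral_le_l1Norm hUX (S ×ˢ T))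
    (hψ.abs_setIntegral_compMap_le_cutNorm hXW hS hT))

theorem exists_mPhi0_tendsto_setIntegral_sub_compMap {U W : I01 × I01 → ℝ}
    {X : ℕ → I01 × I01 → ℝ} {ψ : ℕ → I01 → I01} (hψ : ∀ t, MPhi0 (ψ t))
    (hU : Integrable U volume) (hX : ∀ t, Integrable (X t) volume) (hW : Integrable W volume)
    (hUX : Tendsto (fun t => ∫ p, |U p - compMap (X t) (ψ t) p|) atTop (𝓝 0))
    (hXW : Tendsto (fun t => gDeltaBox (X t) W) atTop (𝓝 0)) :
    ∃ χ : ℕ → I01 → I01, (∀ t, MPhi0 (χ t)) ∧ ∀ S T : Set I01, MeasurableSet S →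
      MeasurableSet T →
        Tendsto (fun t => ∫ p in S ×ˢ T, (U p - compMap W (χ t) p)) atTop (𝓝 0) := by
  choose φ hφ hφcut using fun t => exists_mPhi0_lt_of_sInf_lt
    (F := fun φ => cutNorm fun q => X t q - compMap W φ q)
    (lt_add_of_pos_right (gDeltaBox (X t) W) (pow_pos (one_half_pos (α := ℝ)) t))
  refine ⟨fun t => φ t ∘ ψ t, fun t => (hφ t).comp (hψ t), fun S T hS hT => ?_⟩
  refine squeeze_zero_norm (a := fun t =>
      (∫ p, |U p - compMap (X t) (ψ t) p|) + (gDeltaBox (X t) W + (1 / 2) ^ t))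
    (fun t => (abs_setIntegral_sub_compMap_comp_le (hψ t)
      (hU.sub ((hψ t).2.1.integrable_compMap (hX t)))
      ((hX t).sub ((hφ t).2.1.integrable_compMap hW)) hS hT).trans
      (add_le_add le_rfl (hφcut t).le)) ?_
  simpa using hUX.add (hXW.add (tendsto_pow_atTop_nhds_zero_of_lt_one (r := (1 / 2 : ℝ))
    (by norm_num) (by norm_num)))

theorem no_cauchy_subsequence_of_not_zero_one_valued_general
    (W : I01 × I01 → ℝ) (hW : IsGraphon W) (hW01 : ∀ p, W p ∈ Set.Icc (0 : ℝ) 1)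
    (hWnot : volume {p : I01 × I01 | W p = 0 ∨ W p = 1} < 1)
    (Wseq : ℕ → I01 × I01 → ℝ) (hWseq : ∀ n, IsGraphon (Wseq n))
    (hWseq01ae : ∀ n, ∀ᵐ p ∂(volume : Measure (I01 × I01)), Wseq n p = 0 ∨ Wseq n p = 1)
    (hbox : Filter.Tendsto (fun n => gDeltaBox (Wseq n) W) Filter.atTop (nhds 0)) :
    ¬ ∃ idx : ℕ → ℕ, StrictMono idx ∧
      ∀ ε : ℝ, 0 < ε → ∃ K : ℕ, ∀ k l : ℕ, K ≤ k → K ≤ l →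
        gDelta1 (Wseq (idx k)) (Wseq (idx l)) < ε := by
  rintro ⟨idx, hidx, hcauchy⟩
  choose K hK using fun t : ℕ => hcauchy ((1 / 2) ^ t) (by positivity)
  obtain ⟨N, hN, hKN⟩ := extraction_forall_of_eventually fun t => eventually_ge_atTop (K t)
  obtain ⟨U, hUm, hU, hU01, ψ, hψ, hUψ⟩ := exists_zero_one_limit_of_gDelta1_lt_geometric
    (X := fun t => Wseq (idx (N t))) (fun t => (hWseq _).integrable) (fun t => hWseq01ae _)
    fun t => hK t _ _ (hKN t) ((hKN t).trans (hN t.lt_succ_self).le)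
  obtain ⟨χ, hχ, hrect⟩ := exists_mPhi0_tendsto_setIntegral_sub_compMap hψ hU
    (fun t => (hWseq _).integrable) hW.integrable hUψ (hbox.comp (hidx.comp hN).tendsto_atTop)
  have hWχ (t : ℕ) : Integrable (compMap W (χ t)) volume :=
    (hχ t).2.1.integrable_compMap hW.integrable
  have hL1 := tendsto_integral_abs_sub_of_tendsto_setIntegral_prod hUm hU01 (fun t => (hWχ t).1)
    (fun t => Eventually.of_forall fun p => hW01 _) hrect
  refine (integral_min_one_sub_pos hW.integrable.1 hW01 hWnot).not_ge
    (ge_of_tendsto' hL1 fun t => ?_)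
  rw [← (hχ t).2.1.integral_compMap (F := fun p => min (W p) (1 - W p))
    (by have := hW.integrable.1; fun_prop)]
  refine integral_mono_of_nonneg ?_ (hU.sub (hWχ t)).abs ?_
  · exact Eventually.of_forall fun p => le_min (hW01 _).1 (sub_nonneg.2 (hW01 _).2)
  · filter_upwards [hU01] with p hp using min_one_sub_le_abs_sub hp

/-- If `W` is not `{0,1}`-valued a.e. and the `W_n` are a.e. `{0,1}`-valued graphons
converging to `W` in cut distance, then `(W_n)` has no `δ₁`-Cauchy subsequence. -/
theorem no_cauchy_subsequence_of_not_zero_one_valued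
    (W : I01 × I01 → ℝ) (hW : IsGraphon W) (hW01 : ∀ p, W p ∈ Set.Icc (0 : ℝ) 1)
    (hWnot : volume {p : I01 × I01 | W p = 0 ∨ W p = 1} < 1)
    (Wseq : ℕ → I01 × I01 → ℝ) (hWseq : ∀ n, IsGraphon (Wseq n))
    (hWseq01 : ∀ n p, Wseq n p ∈ Set.Icc (0 : ℝ) 1)
    (hWseq01ae : ∀ n, ∀ᵐ p ∂(volume : Measure (I01 × I01)), Wseq n p = 0 ∨ Wseq n p = 1)
    (hbox : Filter.Tendsto (fun n => gDeltaBox (Wseq n) W) Filter.atTop (nhds 0)) :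
    ¬ ∃ idx : ℕ → ℕ, StrictMono idx ∧
      ∀ ε : ℝ, 0 < ε → ∃ K : ℕ, ∀ k l : ℕ, K ≤ k → K ≤ l →
        gDelta1 (Wseq (idx k)) (Wseq (idx l)) < ε :=
  no_cauchy_subsequence_of_not_zero_one_valued_general W hW hW01 hWnot Wseq hWseq hWseq01ae hbox

end
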